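/- Second operator product formula: H_n(x,s,q) = (x − q s D_q)(x − q³ s D_q)···(x − q^{2n−1} s D_q) applied to 1. -/

import Mathlib

noncomputable section

/-- The q-integer `[n]_q = (1 - q^n)/(1 - q)`. -/
def qnat (q : ℝ) (n : ℕ) : ℝ := (1 - q ^ n) / (1 - q)

/-- The q-factorial `[n]_q!`. -/
def qfac (q : ℝ) (n : ℕ) : ℝ := ∏ j ∈ Finset.range n, qnat q (j + 1)

/-- The Gaussian binomial coefficient. -/
def qbinom (q : ℝ) (n k : ℕ) : ℝ := qfac q n / (qfac q k * qfac q (n - k))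

/-- The odd q-double factorial `[2k-1]_q!! = [1]_q [3]_q ⋯ [2k-1]_q`. -/
def qdf (q : ℝ) (k : ℕ) : ℝ := ∏ i ∈ Finset.range k, qnat q (2 * i + 1)

/-- The bivariate q-Hermite polynomial
`H n (x,s,q) = ∑_{2k ≤ n} (-s)^k q^(k²) qbinom(n,2k) [2k-1]_q!! x^(n-2k)`. -/
def qHermite (q s : ℝ) (n : ℕ) (x : ℝ) : ℝ :=
  ∑ k ∈ Finset.range (n / 2 + 1),
    (-s) ^ k * q ^ (k ^ 2) * qbinom q n (2 * k) * qdf q k * x ^ (n - 2 * k)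

open Polynomial

/-- The q-Hermite polynomial as an element of `ℝ[X]` (variable `x`). -/
def qHermitePoly (q s : ℝ) (n : ℕ) : Polynomial ℝ :=
  ∑ k ∈ Finset.range (n / 2 + 1),
    C ((-s) ^ k * q ^ (k ^ 2) * qbinom q n (2 * k) * qdf q k) * X ^ (n - 2 * k)

/-- The q-derivative on polynomials, determined by `D_q x^m = [m]_q x^(m-1)`. -/
def qDeriv (q : ℝ) (p : Polynomial ℝ) : Polynomial ℝ :=
  p.sum fun m a => C (a * qnat q m) * X ^ (m - 1)

/-- Apply the operators `(x - q^i s D_q)` for the exponents `i` in the list `l`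
(rightmost factor = last element of `l` acts first) to the constant polynomial 1. -/
def qOpProd (q s : ℝ) (l : List ℕ) : Polynomial ℝ :=
  l.foldr (fun i p => X * p - C (q ^ i * s) * qDeriv q p) 1

end

/-!
Peeling off the leftmost factor `x - q s D_q` leaves the product of the factors
`x - q^(2i+3) s D_q = x - q^(2i+1) (q² s) D_q`, i.e. the same operator product of length `n` with
`s` replaced by `q² s`. By induction the theorem therefore reduces to the recurrence
`H_{n+1}(x, s) = x H_n(x, q² s) - q s D_q H_n(x, q² s)`. Comparing coefficients of `x^j`, this
recurrence is the q-Pascal rule `[n+1, m+1]_q = q^(m+1) [n, m+1]_q + [n, m]_q` combined with the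
absorption identity `[n, m+1]_q [m+1]_q = [n, m]_q [n-m]_q`.
-/

open Polynomial Finset

section QNumbers

variable {q : ℝ}

lemma qnat_zero (q : ℝ) : qnat q 0 = 0 := by simp [qnat]

lemma qnat_add (q : ℝ) (a b : ℕ) : qnat q (a + b) = q ^ a * qnat q b + qnat q a := by
  simp only [qnat, pow_add]
  ring

lemma qfac_succ (q : ℝ) (n : ℕ) : qfac q (n + 1) = qfac q n * qnat q (n + 1) :=
  prod_range_succ _ n

lemma qdf_succ (q : ℝ) (k : ℕ) : qdf q (k + 1) = qdf q k * qnat q (2 * k + 1) :=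
  prod_range_succ _ k

lemma qnat_succ_ne_zero (hq : ∀ m, q ^ (m + 1) ≠ 1) (n : ℕ) : qnat q (n + 1) ≠ 0 := by
  have h1 : 1 - q ≠ 0 := sub_ne_zero.mpr (by simpa using (hq 0).symm)
  exact div_ne_zero (sub_ne_zero.mpr (hq n).symm) h1

lemma qfac_ne_zero (hq : ∀ m, q ^ (m + 1) ≠ 1) (n : ℕ) : qfac q n ≠ 0 :=
  prod_ne_zero_iff.mpr fun i _ => qnat_succ_ne_zero hq i

lemma qfac_zero (q : ℝ) : qfac q 0 = 1 := prod_range_zero _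

lemma qbinom_zero_right (hq : ∀ m, q ^ (m + 1) ≠ 1) (n : ℕ) : qbinom q n 0 = 1 := by
  rw [qbinom, Nat.sub_zero, qfac_zero, one_mul, div_self (qfac_ne_zero hq n)]

lemma qbinom_self (hq : ∀ m, q ^ (m + 1) ≠ 1) (n : ℕ) : qbinom q n n = 1 := by
  rw [qbinom, Nat.sub_self, qfac_zero, mul_one, div_self (qfac_ne_zero hq n)]

lemma qbinom_succ_succ (hq : ∀ m, q ^ (m + 1) ≠ 1) {n m : ℕ} (h : m < n) :
    qbinom q (n + 1) (m + 1) = q ^ (m + 1) * qbinom q n (m + 1) + qbinom q n m := by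
  obtain ⟨r, rfl⟩ := Nat.exists_eq_add_of_lt h
  have hfac := qfac_ne_zero hq
  have hnat := qnat_succ_ne_zero hq
  have hsplit : qnat q (m + r + 1 + 1) = q ^ (m + 1) * qnat q (r + 1) + qnat q (m + 1) := by
    rw [show m + r + 1 + 1 = (m + 1) + (r + 1) by ring, qnat_add]
  rw [qbinom, qbinom, qbinom, show m + r + 1 + 1 - (m + 1) = r + 1 by omega,
    show m + r + 1 - (m + 1) = r by omega, show m + r + 1 - m = r + 1 by omega,
    qfac_succ q (m + r + 1), qfac_succ q m, qfac_succ q r, hsplit]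
  field_simp [hfac, hnat]

lemma qbinom_succ_mul_qnat (hq : ∀ m, q ^ (m + 1) ≠ 1) {n m : ℕ} (h : m < n) :
    qbinom q n (m + 1) * qnat q (m + 1) = qbinom q n m * qnat q (n - m) := by
  obtain ⟨r, rfl⟩ := Nat.exists_eq_add_of_lt h
  have hfac := qfac_ne_zero hq
  have hnat := qnat_succ_ne_zero hq
  simp only [qbinom, show m + r + 1 - (m + 1) = r by omega,
    show m + r + 1 - m = r + 1 by omega, qfac_succ]
  field_simp [hfac, hnat]

end QNumbers

section HermiteCoefficients

variable {q : ℝ}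

noncomputable def hermiteCoeff (q s : ℝ) (n k : ℕ) : ℝ :=
  (-s) ^ k * q ^ (k ^ 2) * qbinom q n (2 * k) * qdf q k

lemma hermiteCoeff_zero_right (hq : ∀ m, q ^ (m + 1) ≠ 1) (s : ℝ) (n : ℕ) :
    hermiteCoeff q s n 0 = 1 := by
  simp [hermiteCoeff, qbinom_zero_right hq, qdf]

lemma hermiteCoeff_succ_succ (hq : ∀ m, q ^ (m + 1) ≠ 1) (s : ℝ) (j k : ℕ) :
    hermiteCoeff q s (j + 2 * k + 3) (k + 1) =
      hermiteCoeff q (q ^ 2 * s) (j + 2 * k + 2) (k + 1)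
        - q * s * qnat q (j + 2) * hermiteCoeff q (q ^ 2 * s) (j + 2 * k + 2) k := by
  have hpascal := qbinom_succ_succ hq (show 2 * k + 1 < j + 2 * k + 2 by omega)
  have habsorb := qbinom_succ_mul_qnat hq (show 2 * k < j + 2 * k + 2 by omega)
  rw [show j + 2 * k + 2 - 2 * k = j + 2 by omega] at habsorb
  simp only [hermiteCoeff, qdf_succ, show 2 * (k + 1) = 2 * k + 1 + 1 by ring,
    show j + 2 * k + 3 = j + 2 * k + 2 + 1 by ring, hpascal]
  linear_combination (-s) ^ (k + 1) * q ^ ((k + 1) ^ 2) * qdf q k * habsorb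

lemma hermiteCoeff_self_succ (hq : ∀ m, q ^ (m + 1) ≠ 1) (s : ℝ) (k : ℕ) :
    hermiteCoeff q s (2 * k + 2) (k + 1) =
      - (q * s * qnat q 1 * hermiteCoeff q (q ^ 2 * s) (2 * k + 1) k) := by
  have habsorb := qbinom_succ_mul_qnat hq (show 2 * k < 2 * k + 1 by omega)
  rw [show 2 * k + 1 - 2 * k = 1 by omega, qbinom_self hq] at habsorb
  simp only [hermiteCoeff, qdf_succ, show 2 * (k + 1) = 2 * k + 2 by ring, qbinom_self hq]
  linear_combination (-s) ^ (k + 1) * q ^ ((k + 1) ^ 2) * qdf q k * habsorb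

end HermiteCoefficients

section Polynomials

variable {q : ℝ}

lemma coeff_qDeriv (q : ℝ) (p : ℝ[X]) (j : ℕ) :
    (qDeriv q p).coeff j = qnat q (j + 1) * p.coeff (j + 1) := by
  rw [qDeriv, coeff_sum, Polynomial.sum_def]
  simp only [coeff_C_mul_X_pow]
  rw [sum_eq_single (j + 1)]
  · simp [mul_comm]
  · intro m _ hm
    rcases m with _ | m
    · simp [qnat_zero]
    · simp only [Nat.add_sub_cancel]
      exact if_neg (by omega)
  · intro h
    simp [notMem_support_iff.mp h]

lemma qHermitePoly_eq_sum (q s : ℝ) (n : ℕ) :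
    qHermitePoly q s n =
      ∑ k ∈ range (n / 2 + 1), C (hermiteCoeff q s n k) * X ^ (n - 2 * k) := rfl

lemma qHermitePoly_zero (q s : ℝ) : qHermitePoly q s 0 = 1 := by
  simp [qHermitePoly, qbinom, qfac_zero, qdf]

lemma coeff_qHermitePoly (q s : ℝ) {n j k : ℕ} (h : n = j + 2 * k) :
    (qHermitePoly q s n).coeff j = hermiteCoeff q s n k := by
  subst h
  rw [qHermitePoly_eq_sum, finsetSum_coeff, sum_eq_single k]
  · simp
  · intro i hi hik
    rw [mem_range] at hi
    rw [coeff_C_mul_X_pow, if_neg (by omega)]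
  · intro h
    exact absurd (mem_range.mpr (by omega)) h

lemma coeff_qHermitePoly_eq_zero (q s : ℝ) {n j : ℕ} (h : ∀ k, n ≠ j + 2 * k) :
    (qHermitePoly q s n).coeff j = 0 := by
  rw [qHermitePoly_eq_sum, finsetSum_coeff]
  refine sum_eq_zero fun i hi => ?_
  have := h i
  rw [mem_range] at hi
  rw [coeff_C_mul_X_pow, if_neg (by omega)]

lemma qHermitePoly_succ (hq : ∀ m, q ^ (m + 1) ≠ 1) (s : ℝ) (n : ℕ) :
    qHermitePoly q s (n + 1) =
      X * qHermitePoly q (q ^ 2 * s) n - C (q * s) * qDeriv q (qHermitePoly q (q ^ 2 * s) n) := by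
  ext j
  rw [coeff_sub, coeff_C_mul, coeff_qDeriv]
  by_cases h : ∃ k, n + 1 = j + 2 * k
  · obtain ⟨k, hk⟩ := h
    rcases j with _ | j <;> rcases k with _ | k
    · omega
    · obtain rfl : n = 2 * k + 1 := by omega
      rw [coeff_X_mul_zero, coeff_qHermitePoly q s hk, coeff_qHermitePoly q _ (k := k) (by ring),
        hermiteCoeff_self_succ hq]
      ring
    · obtain rfl : n = j := by omega
      rw [coeff_X_mul, coeff_qHermitePoly q s hk, coeff_qHermitePoly q _ (k := 0) (by ring),
        coeff_qHermitePoly_eq_zero q _ (by omega), hermiteCoeff_zero_right hq,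
        hermiteCoeff_zero_right hq]
      ring
    · obtain rfl : n = j + 2 * k + 2 := by omega
      rw [coeff_X_mul, coeff_qHermitePoly q s hk, coeff_qHermitePoly q _ (k := k + 1) (by ring),
        coeff_qHermitePoly q _ (k := k) (by ring), hermiteCoeff_succ_succ hq]
      ring
  · simp only [not_exists] at h
    rw [coeff_qHermitePoly_eq_zero q s h,
      coeff_qHermitePoly_eq_zero q _ fun k => by have := h (k + 1); omega]
    rcases j with _ | j
    · simp
    · rw [coeff_X_mul, coeff_qHermitePoly_eq_zero q _ fun k => by have := h k; omega]
      simp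

end Polynomials

section OperatorProduct

lemma qOpProd_cons (q s : ℝ) (i : ℕ) (l : List ℕ) :
    qOpProd q s (i :: l) = X * qOpProd q s l - C (q ^ i * s) * qDeriv q (qOpProd q s l) := rfl

lemma qOpProd_map_add_two (q s : ℝ) (l : List ℕ) :
    qOpProd q s (l.map (· + 2)) = qOpProd q (q ^ 2 * s) l := by
  induction l with
  | nil => simp only [List.map_nil, qOpProd, List.foldr_nil]
  | cons i l ih => rw [List.map_cons, qOpProd_cons, qOpProd_cons, ih, pow_add, mul_assoc]

lemma qOpProd_odd_succ (q s : ℝ) (n : ℕ) :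
    qOpProd q s ((List.range (n + 1)).map fun i => 2 * i + 1) =
      X * qOpProd q (q ^ 2 * s) ((List.range n).map fun i => 2 * i + 1)
        - C (q * s) * qDeriv q (qOpProd q (q ^ 2 * s) ((List.range n).map fun i => 2 * i + 1)) := by
  have hshift : ((fun i => 2 * i + 1) ∘ Nat.succ) = (· + 2) ∘ fun i => 2 * i + 1 := by
    funext i
    simp only [Function.comp, Nat.succ_eq_add_one]
    ring
  rw [List.range_succ_eq_map, List.map_cons, List.map_map, hshift, ← List.map_map, qOpProd_cons,
    qOpProd_map_add_two, Nat.mul_zero, Nat.zero_add, pow_one]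

end OperatorProduct

theorem qHermite_operator_product' (q : ℝ) (hq : 0 < q) (hq1 : q < 1) (s : ℝ) (n : ℕ) :
    qHermitePoly q s n = qOpProd q s ((List.range n).map fun i => 2 * i + 1) := by
  have hroot : ∀ m, q ^ (m + 1) ≠ 1 := fun m => (pow_lt_one₀ hq.le hq1 m.succ_ne_zero).ne
  induction n generalizing s with
  | zero => exact qHermitePoly_zero q s
  | succ n ih => rw [qHermitePoly_succ hroot, qOpProd_odd_succ, ih]
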